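/- Let U ⊆ ℂ be open, let ψ be holomorphic on U with nowhere vanishing derivative, and let Ψ be the lift of ψ. Then for every continuously real-differentiable function f : ℂ × ℂ → ℂ and every (z,y) ∈ U × ℂ: (X(f∘Ψ))(z,y) = (X f)(Ψ(z,y)) + δ₁(ψ)(z,y)·(Y f)(Ψ(z,y)), and (Y(f∘Ψ))(z,y) = (Y f)(Ψ(z,y)). (These twisted Leibniz rules realize the coproduct formulas ΔX = 1⊗X + X⊗1 + δ₁⊗Y and ΔY = 1⊗Y + Y⊗1.) -/

import Mathlib

/-- First-variable Wirtinger derivative ∂₁F(p) = ½(DF(p)(e₁) − i·DF(p)(i·e₁)) for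
F : ℂ × ℂ → ℂ, where DF(p) is the real Fréchet derivative of F at p. -/
noncomputable def wirt1 (F : ℂ × ℂ → ℂ) (p : ℂ × ℂ) : ℂ :=
  (1 / 2 : ℂ) * (fderiv ℝ F p (1, 0) - Complex.I * fderiv ℝ F p (Complex.I, 0))

/-- Second-variable Wirtinger derivative ∂₂F(p) = ½(DF(p)(e₂) − i·DF(p)(i·e₂)). -/
noncomputable def wirt2 (F : ℂ × ℂ → ℂ) (p : ℂ × ℂ) : ℂ :=
  (1 / 2 : ℂ) * (fderiv ℝ F p (0, 1) - Complex.I * fderiv ℝ F p (0, Complex.I))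

/-- The operator (X F)(z,y) = y·∂₁F(z,y). -/
noncomputable def Xop (F : ℂ × ℂ → ℂ) : ℂ × ℂ → ℂ := fun p => p.2 * wirt1 F p

/-- The operator (Y F)(z,y) = y·∂₂F(z,y). -/
noncomputable def Yop (F : ℂ × ℂ → ℂ) : ℂ × ℂ → ℂ := fun p => p.2 * wirt2 F p

/-- The lift of ψ to the frame bundle: Ψ(z,y) = (ψ(z), ψ'(z)·y). -/
noncomputable def liftF (ψ : ℂ → ℂ) : ℂ × ℂ → ℂ × ℂ :=
  fun p => (ψ p.1, deriv ψ p.1 * p.2)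

/-- δ₁(ψ)(z,y) = y·ψ''(z)/ψ'(z). -/
noncomputable def delta1 (ψ : ℂ → ℂ) : ℂ × ℂ → ℂ :=
  fun p => p.2 * (deriv (deriv ψ) p.1 / deriv ψ p.1)

/-! The lift `Ψ` is holomorphic, so its real derivative is `ℂ`-linear and the Wirtinger derivatives
of `f ∘ Ψ` obey the holomorphic chain rule `∂ⱼ(f ∘ Ψ) = Σₖ (∂ₖ f ∘ Ψ) · ∂ⱼΨₖ`. With
`∂₁Ψ = (ψ', y ψ'')` and `∂₂Ψ = (0, ψ')`, multiplying by `y` and writing `y ψ' = (Ψ(z, y)).2` gives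
both rules, the term `y² ψ''` becoming `δ₁(ψ)(z, y) · (Ψ(z, y)).2`. -/

open Complex ContinuousLinearMap

lemma ContinuousLinearMap.apply_eq_re_mul_add_im_mul (m : ℂ →L[ℝ] ℂ) (c : ℂ) :
    m c = c.re * m 1 + c.im * m I := by
  have hc : c = c.re • (1 : ℂ) + c.im • I := by simp
  conv_lhs => rw [hc, map_add, map_smul, map_smul]
  simp only [real_smul]

lemma ContinuousLinearMap.apply_sub_I_mul_apply_I_mul (m : ℂ →L[ℝ] ℂ) (c : ℂ) :
    m c - I * m (I * c) = c * (m 1 - I * m I) := by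
  rw [m.apply_eq_re_mul_add_im_mul c, m.apply_eq_re_mul_add_im_mul (I * c), I_mul_re, I_mul_im]
  push_cast
  linear_combination (m 1 - I * m I) * re_add_im c + (c.im * m I) * I_sq

lemma ContinuousLinearMap.apply_sub_I_mul_apply_I_smul (L : ℂ × ℂ →L[ℝ] ℂ) (w : ℂ × ℂ) :
    L w - I * L (I • w)
      = w.1 * (L (1, 0) - I * L (I, 0)) + w.2 * (L (0, 1) - I * L (0, I)) := by
  have h₁ := (L.comp (inl ℝ ℂ ℂ)).apply_sub_I_mul_apply_I_mul w.1
  have h₂ := (L.comp (inr ℝ ℂ ℂ)).apply_sub_I_mul_apply_I_mul w.2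
  simp only [comp_apply, inl_apply, inr_apply] at h₁ h₂
  have hw : ∀ u : ℂ × ℂ, L u = L (u.1, 0) + L (0, u.2) := fun u => by
    rw [← map_add, Prod.mk_add_mk, add_zero, zero_add]
  rw [hw w, hw (I • w), Prod.smul_fst, Prod.smul_snd, smul_eq_mul, smul_eq_mul]
  linear_combination h₁ + h₂

lemma wirt1_comp {f : ℂ × ℂ → ℂ} {G : ℂ × ℂ → ℂ × ℂ} {G' : ℂ × ℂ →L[ℂ] ℂ × ℂ} {p : ℂ × ℂ}
    (hf : DifferentiableAt ℝ f (G p)) (hG : HasFDerivAt G G' p) :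
    wirt1 (f ∘ G) p = (G' (1, 0)).1 * wirt1 f (G p) + (G' (1, 0)).2 * wirt2 f (G p) := by
  have hD := (hf.hasFDerivAt.comp p (hG.restrictScalars ℝ)).fderiv
  have hI : G' (I, 0) = I • G' (1, 0) := by
    rw [← map_smul]; simp
  simp only [wirt1, wirt2, hD, comp_apply, coe_restrictScalars', hI]
  linear_combination (1 / 2 : ℂ) * (fderiv ℝ f (G p)).apply_sub_I_mul_apply_I_smul (G' (1, 0))

lemma wirt2_comp {f : ℂ × ℂ → ℂ} {G : ℂ × ℂ → ℂ × ℂ} {G' : ℂ × ℂ →L[ℂ] ℂ × ℂ} {p : ℂ × ℂ}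
    (hf : DifferentiableAt ℝ f (G p)) (hG : HasFDerivAt G G' p) :
    wirt2 (f ∘ G) p = (G' (0, 1)).1 * wirt1 f (G p) + (G' (0, 1)).2 * wirt2 f (G p) := by
  have hD := (hf.hasFDerivAt.comp p (hG.restrictScalars ℝ)).fderiv
  have hI : G' (0, I) = I • G' (0, 1) := by
    rw [← map_smul]; simp
  simp only [wirt1, wirt2, hD, comp_apply, coe_restrictScalars', hI]
  linear_combination (1 / 2 : ℂ) * (fderiv ℝ f (G p)).apply_sub_I_mul_apply_I_smul (G' (0, 1))

lemma hasFDerivAt_liftF {ψ : ℂ → ℂ} {z : ℂ} (hψ : DifferentiableAt ℂ ψ z)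
    (hψ' : DifferentiableAt ℂ (deriv ψ) z) (y : ℂ) :
    HasFDerivAt (liftF ψ)
      ((deriv ψ z • fst ℂ ℂ ℂ).prod
        ((y * deriv (deriv ψ) z) • fst ℂ ℂ ℂ + deriv ψ z • snd ℂ ℂ ℂ)) (z, y) := by
  have h₁ := hψ.hasDerivAt.hasFDerivAt.comp (z, y) (hasFDerivAt_fst (𝕜 := ℂ) (p := (z, y)))
  have h₂ := (hψ'.hasDerivAt.hasFDerivAt.comp (z, y) (hasFDerivAt_fst (𝕜 := ℂ) (p := (z, y)))).mul
    (hasFDerivAt_snd (𝕜 := ℂ) (p := (z, y)))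
  refine (h₁.prodMk h₂).congr_fderiv ?_
  ext <;> simp [mul_comm]

/-- Twisted Leibniz rules realizing the coproduct formulas
ΔX = 1⊗X + X⊗1 + δ₁⊗Y and ΔY = 1⊗Y + Y⊗1: for ψ holomorphic with nowhere vanishing
derivative on the open set U, with lift Ψ, and f : ℂ × ℂ → ℂ continuously
real-differentiable, one has on U × ℂ:
X(f∘Ψ) = (X f)∘Ψ + δ₁(ψ)·((Y f)∘Ψ) and Y(f∘Ψ) = (Y f)∘Ψ. -/
theorem stmt5 (U : Set ℂ) (hU : IsOpen U) (ψ : ℂ → ℂ)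
    (hψ : DifferentiableOn ℂ ψ U) (hne : ∀ z ∈ U, deriv ψ z ≠ 0)
    (f : ℂ × ℂ → ℂ) (hf : ContDiff ℝ 1 f) :
    ∀ z ∈ U, ∀ y : ℂ,
      Xop (f ∘ liftF ψ) (z, y)
          = Xop f (liftF ψ (z, y)) + delta1 ψ (z, y) * Yop f (liftF ψ (z, y)) ∧
      Yop (f ∘ liftF ψ) (z, y) = Yop f (liftF ψ (z, y)) := by
  intro z hz y
  have hψa := hψ.analyticOnNhd hU
  have hΨ := hasFDerivAt_liftF (hψa z hz).differentiableAt (hψa.deriv z hz).differentiableAt y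
  have hfΨ := hf.differentiable one_ne_zero (liftF ψ (z, y))
  have ha := hne z hz
  simp only [Xop, Yop, wirt1_comp hfΨ hΨ, wirt2_comp hfΨ hΨ, delta1, liftF, prod_apply, add_apply,
    smul_apply, coe_fst', coe_snd', smul_eq_mul, mul_one, mul_zero, add_zero, zero_add, zero_mul]
  constructor
  · field_simp
  · ring
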